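/- Let G be an effective Hausdorff ample groupoid and R a commutative ring with unit. Then the convolution algebra RG is prime if and only if R is an integral domain and G is topologically transitive. -/

import Mathlib

universe u

/-- An étale topological groupoid: arrows form a topological space, units are
identified with idempotent arrows via the domain map `d` and range map `r`;
the domain map is a local homeomorphism. -/
structure EtaleGroupoid : Type (u + 1) where
  Arr : Type u
  top : TopologicalSpace Arr
  d : Arr → Arr
  r : Arr → Arr
  comp : Arr → Arr → Arr
  inv : Arr → Arr
  d_d : ∀ g, d (d g) = d g
  r_d : ∀ g, r (d g) = d g
  d_r : ∀ g, d (r g) = r g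
  r_r : ∀ g, r (r g) = r g
  d_comp : ∀ g h, d g = r h → d (comp g h) = d h
  r_comp : ∀ g h, d g = r h → r (comp g h) = r g
  comp_assoc : ∀ g h k, d g = r h → d h = r k → comp (comp g h) k = comp g (comp h k)
  comp_unit_right : ∀ g, comp g (d g) = g
  comp_unit_left : ∀ g, comp (r g) g = g
  d_inv : ∀ g, d (inv g) = r g
  r_inv : ∀ g, r (inv g) = d g
  inv_inv : ∀ g, inv (inv g) = g
  inv_comp : ∀ g, comp (inv g) g = d g
  comp_inv : ∀ g, comp g (inv g) = r g
  continuous_d : @Continuous Arr Arr top top d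
  continuous_r : @Continuous Arr Arr top top r
  continuous_inv : @Continuous Arr Arr top top inv
  continuous_comp : @Continuous {p : Arr × Arr // d p.1 = r p.2} Arr
    (@instTopologicalSpaceSubtype _ _ (@instTopologicalSpaceProd _ _ top top)) top
    (fun p => comp p.val.1 p.val.2)
  etale : ∀ g : Arr, ∃ U : Set Arr, @IsOpen Arr top U ∧ g ∈ U ∧ Set.InjOn d U ∧
    ∀ V, V ⊆ U → @IsOpen Arr top V → @IsOpen Arr top (d '' V)

instance (G : EtaleGroupoid) : TopologicalSpace G.Arr := G.top

namespace EtaleGroupoid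

variable (G : EtaleGroupoid)

/-- The unit space `G⁽⁰⁾`, identified with the set of unit arrows. -/
def units : Set G.Arr := Set.range G.d

/-- A subset of the unit space is invariant if it is a union of orbits. -/
def Invariant (X : Set G.Arr) : Prop := ∀ g : G.Arr, G.d g ∈ X → G.r g ∈ X

/-- The orbit of a unit `x`. -/
def orbit (x : G.Arr) : Set G.Arr := {y | ∃ g, G.d g = x ∧ G.r g = y}

/-- `U` is an open subset of the unit space (open in the subspace topology). -/
def UnitsOpen (U : Set G.Arr) : Prop :=
  U ⊆ G.units ∧ IsOpen (Subtype.val ⁻¹' U : Set ↥G.units)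

/-- `C` is a closed subset of the unit space (closed in the subspace topology). -/
def UnitsClosed (C : Set G.Arr) : Prop :=
  C ⊆ G.units ∧ IsClosed (Subtype.val ⁻¹' C : Set ↥G.units)

/-- `X` is dense in the unit space. -/
def UnitsDense (X : Set G.Arr) : Prop :=
  Dense (Subtype.val ⁻¹' X : Set ↥G.units)

/-- `X` is nowhere dense in the unit space. -/
def UnitsNowhereDense (X : Set G.Arr) : Prop :=
  interior (closure (Subtype.val ⁻¹' X : Set ↥G.units)) = ∅

/-- Topological transitivity: every non-empty open invariant subset of the
unit space is dense. -/
def TopTransitive : Prop :=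
  ∀ U : Set G.Arr, G.UnitsOpen U → G.Invariant U → U.Nonempty → G.UnitsDense U

end EtaleGroupoid

namespace EtaleGroupoid

variable (G : EtaleGroupoid)

/-- The underlying set of the groupoid convolution algebra `RG`: the `R`-span of
characteristic functions of compact open subsets of the arrow space. -/
def AlgebraSet (R : Type) [CommRing R] : Set (G.Arr → R) :=
  (Submodule.span R {f : G.Arr → R | ∃ U : Set G.Arr,
      IsCompact U ∧ IsOpen U ∧ f = Set.indicator U fun _ => (1 : R)} :
    Submodule R (G.Arr → R))

/-- Convolution: `(f ⋆ g)(x) = ∑_{d h = d x} f (x h⁻¹) g (h)`. -/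
noncomputable def conv {R : Type} [CommRing R] (f g : G.Arr → R) : G.Arr → R := fun x =>
  ∑ᶠ (h : G.Arr) (_ : G.d h = G.d x), f (G.comp x (G.inv h)) * g h

/-- The convolution algebra `RG` is a prime ring (elementwise formulation). -/
def AlgPrime (R : Type) [CommRing R] : Prop :=
  (∃ f ∈ G.AlgebraSet R, f ≠ 0) ∧
  ∀ f ∈ G.AlgebraSet R, ∀ g ∈ G.AlgebraSet R,
    (∀ h ∈ G.AlgebraSet R, G.conv (G.conv f h) g = 0) → f = 0 ∨ g = 0

/-- The convolution algebra `RG` is a semiprime ring (elementwise formulation). -/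
def AlgSemiprime (R : Type) [CommRing R] : Prop :=
  ∀ f ∈ G.AlgebraSet R, (∀ h ∈ G.AlgebraSet R, G.conv (G.conv f h) f = 0) → f = 0

/-- `X ⊆ G⁽⁰⁾` is `R`-dense: every non-zero element of `RG` is non-zero at some
arrow whose domain lies in `X`. -/
def RDense (R : Type) [CommRing R] (X : Set G.Arr) : Prop :=
  ∀ f ∈ G.AlgebraSet R, f ≠ (0 : G.Arr → R) → ∃ g : G.Arr, f g ≠ 0 ∧ G.d g ∈ X

/-- An étale groupoid is ample if its unit space is (locally compact) Hausdorff
with a basis of compact open sets. -/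
def Ample : Prop :=
  T2Space ↥G.units ∧
  ∀ x ∈ G.units, ∀ U : Set G.Arr, G.UnitsOpen U → x ∈ U →
    ∃ K : Set G.Arr, K ⊆ U ∧ x ∈ K ∧ IsCompact K ∧ G.UnitsOpen K

/-- A groupoid is effective if the interior of the isotropy bundle is the unit
space. -/
def Effective : Prop := interior {g : G.Arr | G.d g = G.r g} = G.units

end EtaleGroupoid

/-!
Both directions test primeness on indicator functions of compact open sets. If `RG` is prime,
then for `a * b = 0` the elements `a χ_K` and `b χ_K` (with `K` a compact open set of units) have
`a χ_K ⋆ h ⋆ b χ_K = 0` for all `h`; and if an open invariant `U` missed an open set of units,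
`χ_L ⋆ h ⋆ χ_K = 0` for compact open `L ⊆ U` and `K` in that open set, since no arrow joins them.

Conversely, let `f, g ≠ 0`. Both are locally constant, so they are non-zero constants on compact
open bisections `B₁`, `B₂`. Effectiveness shrinks `d(B₂)` to a non-empty open set `W` of units such
that an arrow of the support of `g` with domain in `W` and the same range as some `β ∈ B₂` with
`d β ∈ W` is `β` itself. Transitivity gives an arrow `γ` from `W` to `r(B₁)`; for a compact open
bisection `D ∋ γ` over `W` and `C = B₁⁻¹ D B₂⁻¹`, the sum defining `(f ⋆ χ_C ⋆ g)(γ)` then has a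
single non-zero term, `f(B₁) g(B₂)`.
-/

namespace EtaleGroupoid

open Set

variable {G : EtaleGroupoid}

lemma mem_units_iff {u : G.Arr} : u ∈ G.units ↔ G.d u = u :=
  ⟨by rintro ⟨g, rfl⟩; exact G.d_d g, fun h => ⟨u, h⟩⟩

lemma d_mem_units (g : G.Arr) : G.d g ∈ G.units := ⟨g, rfl⟩

lemma r_mem_units (g : G.Arr) : G.r g ∈ G.units := mem_units_iff.2 (G.d_r g)

lemma r_eq_self_of_mem_units {u : G.Arr} (hu : u ∈ G.units) : G.r u = u := by
  obtain ⟨g, rfl⟩ := hu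
  exact G.r_d g

lemma inv_eq_self_of_mem_units {u : G.Arr} (hu : u ∈ G.units) : G.inv u = u := by
  calc G.inv u = G.comp (G.inv u) (G.d (G.inv u)) := (G.comp_unit_right _).symm
    _ = G.comp (G.inv u) u := by rw [G.d_inv, r_eq_self_of_mem_units hu]
    _ = u := by rw [G.inv_comp, mem_units_iff.1 hu]

lemma inv_injective : Function.Injective G.inv :=
  Function.LeftInverse.injective G.inv_inv

lemma comp_inv_cancel_right {z w : G.Arr} (h : G.d z = G.r w) :
    G.comp (G.comp z w) (G.inv w) = z := by
  rw [G.comp_assoc _ _ _ h (G.r_inv w).symm, G.comp_inv, ← h, G.comp_unit_right]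

lemma inv_comp_cancel_right {z w : G.Arr} (h : G.d z = G.d w) :
    G.comp (G.comp z (G.inv w)) w = z := by
  rw [G.comp_assoc _ _ _ (by rw [G.r_inv, h]) (G.d_inv w), G.inv_comp, ← h, G.comp_unit_right]

lemma comp_inv_cancel_left {w z : G.Arr} (h : G.r w = G.r z) :
    G.comp w (G.comp (G.inv w) z) = z := by
  rw [← G.comp_assoc _ _ _ (G.r_inv w).symm (by rw [G.d_inv, h]), G.comp_inv, h,
    G.comp_unit_left]

lemma eq_of_comp_inv_mem_units {x k : G.Arr} (hk : G.d k = G.d x)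
    (hu : G.comp x (G.inv k) ∈ G.units) : k = x := by
  have hco : G.d x = G.r (G.inv k) := by rw [G.r_inv, hk]
  have hxk : G.comp x (G.inv k) = G.r k := by
    rw [← mem_units_iff.1 hu, G.d_comp _ _ hco, G.d_inv]
  rw [← inv_comp_cancel_right hk.symm, hxk, G.comp_unit_left]

lemma isClosed_units [T2Space G.Arr] : IsClosed G.units := by
  rw [show G.units = {x | G.d x = x} from Set.ext fun _ => mem_units_iff]
  exact isClosed_eq G.continuous_d continuous_id

lemma isOpen_units (heff : G.Effective) : IsOpen G.units :=
  heff ▸ isOpen_interior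

lemma continuousOn_comp :
    ContinuousOn (fun p : G.Arr × G.Arr => G.comp p.1 p.2) {p | G.d p.1 = G.r p.2} :=
  continuousOn_iff_continuous_domRestrict.2 G.continuous_comp

lemma isOpen_image_inv {B : Set G.Arr} (hB : IsOpen B) : IsOpen (G.inv '' B) :=
  image_eq_preimage_of_inverse G.inv_inv G.inv_inv ▸ hB.preimage G.continuous_inv

lemma isOpenMap_d : IsOpenMap G.d := by
  refine fun V hV => isOpen_iff_forall_mem_open.2 ?_
  rintro _ ⟨x, hxV, rfl⟩
  obtain ⟨U, hUo, hxU, -, hUd⟩ := G.etale x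
  exact ⟨G.d '' (V ∩ U), image_mono inter_subset_left,
    hUd _ inter_subset_right (hV.inter hUo), x, ⟨hxV, hxU⟩, rfl⟩

lemma isOpenMap_r : IsOpenMap G.r := by
  intro V hV
  rw [← image_congr fun x _ => G.d_inv x, ← image_image]
  exact isOpenMap_d _ (isOpen_image_inv hV)

lemma isLocalHomeomorph_d : IsLocalHomeomorph G.d := by
  refine isLocalHomeomorph_iff_isOpenEmbedding_restrict.2 fun x => ?_
  obtain ⟨U, hUo, hxU, hUinj, -⟩ := G.etale x
  exact ⟨U, hUo.mem_nhds hxU, .of_continuous_injective_isOpenMap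
    (G.continuous_d.comp continuous_subtype_val) (fun a b h => Subtype.ext (hUinj a.2 b.2 h))
    (isOpenMap_d.comp hUo.isOpenMap_subtype_val)⟩

lemma exists_chart_d {x : G.Arr} {N : Set G.Arr} (hN : IsOpen N) (hx : x ∈ N) :
    ∃ e : OpenPartialHomeomorph G.Arr G.Arr,
      ⇑e = G.d ∧ x ∈ e.source ∧ e.source ⊆ N ∧ InjOn G.r e.source := by
  obtain ⟨e, hxe, he⟩ := isLocalHomeomorph_d x
  obtain ⟨U, hUo, hxU, hUinj, -⟩ := G.etale (G.inv x)
  have hs : IsOpen (N ∩ G.inv ⁻¹' U) := hN.inter (hUo.preimage G.continuous_inv)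
  refine ⟨e.restrOpen _ hs, he.symm, ⟨hxe, hx, hxU⟩, fun y hy => hy.2.1, ?_⟩
  intro y hy z hz hyz
  refine inv_injective (hUinj hy.2.2 hz.2.2 ?_)
  rwa [G.d_inv, G.d_inv]

def mulSet (A B : Set G.Arr) : Set G.Arr :=
  {z | ∃ a ∈ A, ∃ b ∈ B, G.d a = G.r b ∧ G.comp a b = z}

lemma isCompact_mulSet [T2Space G.Arr] {A B : Set G.Arr} (hA : IsCompact A) (hB : IsCompact B) :
    IsCompact (mulSet A B) := by
  have h : mulSet A B = (fun p => G.comp p.1 p.2) '' (A ×ˢ B ∩ {p | G.d p.1 = G.r p.2}) := by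
    ext z
    constructor
    · rintro ⟨a, ha, b, hb, hab, rfl⟩
      exact ⟨(a, b), ⟨⟨ha, hb⟩, hab⟩, rfl⟩
    · rintro ⟨⟨a, b⟩, ⟨⟨ha, hb⟩, hab⟩, rfl⟩
      exact ⟨a, ha, b, hb, hab, rfl⟩
  rw [h]
  exact ((hA.prod hB).inter_right (isClosed_eq (G.continuous_d.comp continuous_fst)
    (G.continuous_r.comp continuous_snd))).image_of_continuousOn
      (continuousOn_comp.mono inter_subset_right)

lemma isOpen_mulSet {A B : Set G.Arr} (hA : IsOpen A) (hB : IsOpen B) :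
    IsOpen (mulSet A B) := by
  refine isOpen_iff_forall_mem_open.2 ?_
  rintro _ ⟨a, ha, b, hb, hab, rfl⟩
  obtain ⟨e, he, hbe, heB, -⟩ := exists_chart_d hB hb
  -- `e.symm ∘ d` picks the unique arrow of `e.source` with the same domain
  have hσ : ∀ z ∈ G.d ⁻¹' e.target, G.d (e.symm (G.d z)) = G.d z := fun z hz => by
    rw [← he] at hz ⊢
    exact e.right_inv hz
  have hψ : ContinuousOn (fun z => G.comp z (G.inv (e.symm (G.d z)))) (G.d ⁻¹' e.target) :=
    continuousOn_comp.comp (continuousOn_id.prodMk (G.continuous_inv.comp_continuousOn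
      (e.continuousOn_symm.comp G.continuous_d.continuousOn fun _ hz => hz)))
      fun z hz => show G.d z = G.r (G.inv (e.symm (G.d z))) by rw [G.r_inv, hσ z hz]
  have hdb : G.d (G.comp a b) = e b := by rw [he, G.d_comp _ _ hab]
  refine ⟨_, ?_, hψ.isOpen_inter_preimage (e.open_target.preimage G.continuous_d) hA, ?_, ?_⟩
  · rintro z ⟨hz, hzA⟩
    refine ⟨_, hzA, _, heB (e.map_target hz), ?_, inv_comp_cancel_right (hσ z hz).symm⟩
    rw [G.d_comp _ _ (by rw [G.r_inv, hσ z hz]), G.d_inv]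
  · rw [mem_preimage, hdb]
    exact e.map_source hbe
  · simp only [mem_preimage, hdb, e.left_inv hbe, comp_inv_cancel_right hab, ha]

structure IsCompactOpenBisection (B : Set G.Arr) : Prop where
  isCompact : IsCompact B
  isOpen : IsOpen B
  injOn_d : InjOn G.d B
  injOn_r : InjOn G.r B

lemma IsCompactOpenBisection.inv {B : Set G.Arr} (hB : IsCompactOpenBisection B) :
    IsCompactOpenBisection (G.inv '' B) where
  isCompact := hB.isCompact.image G.continuous_inv
  isOpen := isOpen_image_inv hB.isOpen
  injOn_d := by
    rintro _ ⟨x, hx, rfl⟩ _ ⟨y, hy, rfl⟩ h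
    rw [G.d_inv, G.d_inv] at h
    rw [hB.injOn_r hx hy h]
  injOn_r := by
    rintro _ ⟨x, hx, rfl⟩ _ ⟨y, hy, rfl⟩ h
    rw [G.r_inv, G.r_inv] at h
    rw [hB.injOn_d hx hy h]

lemma IsCompactOpenBisection.mulSet [T2Space G.Arr] {A B : Set G.Arr}
    (hA : IsCompactOpenBisection A) (hB : IsCompactOpenBisection B) :
    IsCompactOpenBisection (mulSet A B) where
  isCompact := isCompact_mulSet hA.isCompact hB.isCompact
  isOpen := isOpen_mulSet hA.isOpen hB.isOpen
  injOn_d := by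
    rintro _ ⟨a, ha, b, hb, hab, rfl⟩ _ ⟨a', ha', b', hb', hab', rfl⟩ h
    rw [G.d_comp _ _ hab, G.d_comp _ _ hab'] at h
    obtain rfl := hB.injOn_d hb hb' h
    rw [hA.injOn_d ha ha' (hab.trans hab'.symm)]
  injOn_r := by
    rintro _ ⟨a, ha, b, hb, hab, rfl⟩ _ ⟨a', ha', b', hb', hab', rfl⟩ h
    rw [G.r_comp _ _ hab, G.r_comp _ _ hab'] at h
    obtain rfl := hA.injOn_r ha ha' h
    rw [hB.injOn_r hb hb' (hab.symm.trans hab')]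

lemma UnitsOpen.isOpen (heff : G.Effective) {U : Set G.Arr} (hU : G.UnitsOpen U) : IsOpen U := by
  rw [← inter_eq_right.2 hU.1, ← Subtype.image_preimage_coe]
  exact (isOpen_units heff).isOpenMap_subtype_val _ hU.2

lemma Ample.exists_isCompact_isOpen (hample : G.Ample) (heff : G.Effective) {U : Set G.Arr}
    (hU : IsOpen U) (hUu : U ⊆ G.units) {x : G.Arr} (hx : x ∈ U) :
    ∃ K ⊆ U, x ∈ K ∧ IsCompact K ∧ IsOpen K := by
  obtain ⟨K, hKU, hxK, hKc, hK⟩ :=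
    hample.2 x (hUu hx) U ⟨hUu, hU.preimage continuous_subtype_val⟩ hx
  exact ⟨K, hKU, hxK, hKc, hK.isOpen heff⟩

lemma exists_isCompactOpenBisection (hample : G.Ample) (heff : G.Effective) {N : Set G.Arr}
    (hN : IsOpen N) {x : G.Arr} (hx : x ∈ N) :
    ∃ B, IsCompactOpenBisection B ∧ x ∈ B ∧ B ⊆ N := by
  obtain ⟨e, he, hxe, heN, her⟩ := exists_chart_d hN hx
  have hxt : G.d x ∈ e.target := he ▸ e.map_source hxe
  obtain ⟨K, hKt, hxK, hKc, hKo⟩ := hample.exists_isCompact_isOpen heff e.open_target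
    (fun y hy => by rw [← e.right_inv hy, he]; exact d_mem_units _) hxt
  have hB : e.symm '' K = e.source ∩ e ⁻¹' K := e.symm_image_eq_source_inter_preimage hKt
  refine ⟨e.symm '' K, ⟨hKc.image_of_continuousOn (e.continuousOn_symm.mono hKt), ?_, ?_, ?_⟩,
    ?_, ?_⟩
  · exact hB ▸ e.isOpen_inter_preimage hKo
  · exact he ▸ e.injOn.mono (hB ▸ inter_subset_left)
  · exact her.mono (hB ▸ inter_subset_left)
  · rw [hB]
    exact ⟨hxe, by rwa [mem_preimage, he]⟩
  · exact (hB ▸ inter_subset_left).trans heN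

lemma exists_open_subset_avoiding_of_injOn [T2Space G.Arr] (heff : G.Effective)
    {C W : Set G.Arr} (hCo : IsOpen C) (hCd : InjOn G.d C) (hCu : Disjoint C G.units)
    (hWo : IsOpen W) (hWne : W.Nonempty) :
    ∃ W' ⊆ W, IsOpen W' ∧ W'.Nonempty ∧ ∀ γ ∈ C, G.d γ ∈ W' → G.r γ ∉ W' := by
  by_cases h : ∃ γ ∈ C, G.d γ ∈ W ∧ G.d γ ≠ G.r γ
  · obtain ⟨γ, hγC, hγW, hγ⟩ := h
    obtain ⟨V₁, V₂, hV₁, hV₂, hdγ, hrγ, hV⟩ := t2_separation hγ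
    refine ⟨W ∩ V₁ ∩ G.d '' (C ∩ G.r ⁻¹' V₂), fun _ h => h.1.1,
      (hWo.inter hV₁).inter (isOpenMap_d _ (hCo.inter (hV₂.preimage G.continuous_r))),
      ⟨G.d γ, ⟨hγW, hdγ⟩, γ, ⟨hγC, hrγ⟩, rfl⟩, ?_⟩
    rintro δ hδC ⟨-, ε, ⟨hεC, hεV₂⟩, hεδ⟩ ⟨⟨-, hrδ⟩, -⟩
    rw [hCd hεC hδC hεδ] at hεV₂
    exact disjoint_left.1 hV hrδ hεV₂
  · -- otherwise `C ∩ d⁻¹ W` is open and inside the isotropy, hence consists of units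
    push Not at h
    refine ⟨W, subset_rfl, hWo, hWne, fun γ hγC hγW _ => disjoint_left.1 hCu hγC ?_⟩
    rw [← heff]
    exact interior_maximal (fun δ hδ => h δ hδ.1 hδ.2)
      (hCo.inter (hWo.preimage G.continuous_d)) ⟨hγC, hγW⟩

lemma exists_open_subset_avoiding [T2Space G.Arr] (heff : G.Effective) {N W : Set G.Arr}
    (hNc : IsCompact N) (hNo : IsOpen N) (hNu : Disjoint N G.units) (hWo : IsOpen W)
    (hWne : W.Nonempty) :
    ∃ W' ⊆ W, IsOpen W' ∧ W'.Nonempty ∧ ∀ γ ∈ N, G.d γ ∈ W' → G.r γ ∉ W' := by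
  classical
  choose U hUo hxU hUinj _ using G.etale
  obtain ⟨t, ht⟩ := hNc.elim_finite_subcover U hUo fun x _ => mem_iUnion.2 ⟨x, hxU x⟩
  suffices ∀ s : Finset G.Arr, ∃ W' ⊆ W, IsOpen W' ∧ W'.Nonempty ∧
      ∀ x ∈ s, ∀ γ ∈ N ∩ U x, G.d γ ∈ W' → G.r γ ∉ W' by
    obtain ⟨W', hW'W, hW'o, hW'ne, hW'⟩ := this t
    refine ⟨W', hW'W, hW'o, hW'ne, fun γ hγ => ?_⟩
    obtain ⟨x, hx, hγx⟩ := mem_iUnion₂.1 (ht hγ)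
    exact hW' x hx γ ⟨hγ, hγx⟩
  intro s
  induction s using Finset.induction_on with
  | empty => exact ⟨W, subset_rfl, hWo, hWne, by simp⟩
  | insert x s _ ih =>
    obtain ⟨W₁, hW₁W, hW₁o, hW₁ne, hW₁⟩ := ih
    obtain ⟨W', hW'W₁, hW'o, hW'ne, hW'⟩ := exists_open_subset_avoiding_of_injOn heff
      (hNo.inter (hUo x)) ((hUinj x).mono inter_subset_right)
      (hNu.mono_left inter_subset_left) hW₁o hW₁ne
    refine ⟨W', hW'W₁.trans hW₁W, hW'o, hW'ne, fun y hy γ hγ hd hr => ?_⟩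
    rcases Finset.mem_insert.1 hy with rfl | hy
    · exact hW' γ hγ hd hr
    · exact hW₁ y hy γ hγ (hW'W₁ hd) (hW'W₁ hr)

lemma exists_open_subset_isolating [T2Space G.Arr] (heff : G.Effective) {B S W : Set G.Arr}
    (hBc : IsCompact B) (hBo : IsOpen B) (hSc : IsCompact S) (hSo : IsOpen S)
    (hWo : IsOpen W) (hWne : W.Nonempty) :
    ∃ W' ⊆ W, IsOpen W' ∧ W'.Nonempty ∧
      ∀ β ∈ B, ∀ k ∈ S, G.r k = G.r β → G.d k ∈ W' → G.d β ∈ W' → k = β := by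
  obtain ⟨W', hW'W, hW'o, hW'ne, hW'⟩ := exists_open_subset_avoiding heff
    ((isCompact_mulSet (hBc.image G.continuous_inv) hSc).diff (isOpen_units heff))
    ((isOpen_mulSet (isOpen_image_inv hBo) hSo).sdiff isClosed_units) disjoint_sdiff_left
    hWo hWne
  refine ⟨W', hW'W, hW'o, hW'ne, fun β hβ k hk hkβ hdk hdβ => ?_⟩
  have hco : G.d (G.inv β) = G.r k := by rw [G.d_inv, hkβ]
  have hunit : G.comp (G.inv β) k ∈ G.units := by
    by_contra hnu
    refine hW' _ ⟨⟨G.inv β, ⟨β, hβ, rfl⟩, k, hk, hco, rfl⟩, hnu⟩ ?_ ?_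
    · rwa [G.d_comp _ _ hco]
    · rwa [G.r_comp _ _ hco, G.r_inv]
  calc k = G.comp β (G.comp (G.inv β) k) := (comp_inv_cancel_left hkβ.symm).symm
    _ = G.comp β (G.d β) := by
      rw [← r_eq_self_of_mem_units hunit, G.r_comp _ _ hco, G.r_inv]
    _ = β := G.comp_unit_right β

lemma TopTransitive.exists_arrow (htrans : G.TopTransitive) {W V : Set G.Arr}
    (hWo : IsOpen W) (hWu : W ⊆ G.units) (hWne : W.Nonempty) (hVo : IsOpen V)
    (hVu : V ⊆ G.units) (hVne : V.Nonempty) : ∃ γ, G.d γ ∈ W ∧ G.r γ ∈ V := by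
  have hSinv : G.Invariant (G.r '' (G.d ⁻¹' W)) := by
    rintro γ ⟨δ, hδ, hδγ⟩
    have hco : G.d γ = G.r δ := hδγ.symm
    exact ⟨G.comp γ δ, by rwa [mem_preimage, G.d_comp _ _ hco], G.r_comp _ _ hco⟩
  obtain ⟨w, hw⟩ := hWne
  have hwu := mem_units_iff.1 (hWu hw)
  have hS := htrans _ ⟨image_subset_iff.2 fun γ _ => r_mem_units γ,
      (isOpenMap_r _ (hWo.preimage G.continuous_d)).preimage continuous_subtype_val⟩ hSinv
    ⟨G.r w, w, by rwa [mem_preimage, hwu], rfl⟩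
  obtain ⟨v, hv⟩ := hVne
  obtain ⟨u, huV, γ, hγ, hγu⟩ :=
    hS.inter_open_nonempty _ (hVo.preimage continuous_subtype_val) ⟨⟨v, hVu hv⟩, hv⟩
  exact ⟨γ, hγ, hγu ▸ huV⟩

section Convolution

variable {R : Type} [CommRing R]

open scoped Classical

lemma indicator_const_mem_algebraSet (a : R) {U : Set G.Arr} (hUc : IsCompact U)
    (hUo : IsOpen U) : (U.indicator fun _ => a) ∈ G.AlgebraSet R := by
  have h : (U.indicator fun _ => a) = a • U.indicator fun _ => (1 : R) := by
    ext x
    by_cases hx : x ∈ U <;> simp [hx]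
  rw [h]
  exact Submodule.smul_mem _ a (Submodule.subset_span ⟨U, hUc, hUo, rfl⟩)

lemma isLocallyConstant_of_mem_algebraSet [T2Space G.Arr] {f : G.Arr → R}
    (hf : f ∈ G.AlgebraSet R) : IsLocallyConstant f := by
  induction hf using Submodule.span_induction with
  | mem f hf =>
    obtain ⟨U, hUc, hUo, rfl⟩ := hf
    exact (LocallyConstant.charFn R ⟨hUc.isClosed, hUo⟩).isLocallyConstant
  | zero => exact IsLocallyConstant.const 0
  | add f g _ _ hf hg => exact hf.add hg
  | smul a f _ hf => exact hf.comp (a • ·)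

lemma exists_isCompact_isOpen_support_subset {f : G.Arr → R} (hf : f ∈ G.AlgebraSet R) :
    ∃ S, IsCompact S ∧ IsOpen S ∧ Function.support f ⊆ S := by
  induction hf using Submodule.span_induction with
  | mem f hf =>
    obtain ⟨U, hUc, hUo, rfl⟩ := hf
    exact ⟨U, hUc, hUo, Set.support_indicator_subset⟩
  | zero => exact ⟨∅, isCompact_empty, isOpen_empty, by simp⟩
  | add f g _ _ hf hg =>
    obtain ⟨S, hSc, hSo, hfS⟩ := hf
    obtain ⟨T, hTc, hTo, hgT⟩ := hg
    exact ⟨S ∪ T, hSc.union hTc, hSo.union hTo,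
      (Function.support_add f g).trans (union_subset_union hfS hgT)⟩
  | smul a f _ hf =>
    obtain ⟨S, hSc, hSo, hfS⟩ := hf
    exact ⟨S, hSc, hSo, (Function.support_const_smul_subset a f).trans hfS⟩

lemma conv_apply (F H : G.Arr → R) (x : G.Arr) :
    G.conv F H x = ∑ᶠ k, if G.d k = G.d x then F (G.comp x (G.inv k)) * H k else 0 :=
  finsum_congr fun _ => finsum_eq_if

lemma conv_apply_eq_zero {F H : G.Arr → R} {x : G.Arr}
    (h : ∀ k, G.d k = G.d x → F (G.comp x (G.inv k)) * H k = 0) : G.conv F H x = 0 := by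
  rw [conv_apply]
  exact finsum_eq_zero_of_forall_eq_zero fun k => ite_eq_right_iff.2 (h k)

lemma conv_apply_eq_single {F H : G.Arr → R} {x k₀ : G.Arr} (hk₀ : G.d k₀ = G.d x)
    (h : ∀ k, G.d k = G.d x → F (G.comp x (G.inv k)) * H k ≠ 0 → k = k₀) :
    G.conv F H x = F (G.comp x (G.inv k₀)) * H k₀ := by
  rw [conv_apply, finsum_eq_single _ k₀ fun k hk =>
    ite_eq_right_iff.2 fun hkx => not_not.1 (mt (h k hkx) hk), if_pos hk₀]

lemma conv_indicator_units_right (F : G.Arr → R) (b : R) {W : Set G.Arr} (hW : W ⊆ G.units)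
    (x : G.Arr) :
    G.conv F (W.indicator fun _ => b) x = if G.d x ∈ W then F x * b else 0 := by
  split_ifs with hx
  · rw [conv_apply_eq_single (G.d_d x), indicator_of_mem hx,
      inv_eq_self_of_mem_units (d_mem_units x), G.comp_unit_right]
    intro k hk hne
    rw [← hk, mem_units_iff.1 (hW (mem_of_indicator_ne_zero (right_ne_zero_of_mul hne)))]
  · refine conv_apply_eq_zero fun k hk => ?_
    rw [indicator_of_notMem fun hkW => hx ?_, mul_zero]
    rwa [← hk, mem_units_iff.1 (hW hkW)]

lemma conv_indicator_units_left (a : R) (F : G.Arr → R) {W : Set G.Arr} (hW : W ⊆ G.units)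
    (x : G.Arr) :
    G.conv (W.indicator fun _ => a) F x = if G.r x ∈ W then a * F x else 0 := by
  split_ifs with hx
  · rw [conv_apply_eq_single rfl, G.comp_inv, indicator_of_mem hx]
    intro k hk hne
    exact eq_of_comp_inv_mem_units hk (hW (mem_of_indicator_ne_zero (left_ne_zero_of_mul hne)))
  · refine conv_apply_eq_zero fun k hk => ?_
    rw [indicator_of_notMem fun hkW => hx ?_, zero_mul]
    rwa [eq_of_comp_inv_mem_units hk (hW hkW), G.comp_inv] at hkW

lemma conv_indicator_apply_of_injOn {F : G.Arr → R} {C : Set G.Arr} (hC : InjOn G.d C)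
    {y c : G.Arr} (hc : c ∈ C) (hcy : G.d c = G.d y) :
    G.conv F (C.indicator fun _ => 1) y = F (G.comp y (G.inv c)) := by
  rw [conv_apply_eq_single hcy, indicator_of_mem hc, mul_one]
  intro k hk hne
  exact hC (mem_of_indicator_ne_zero (right_ne_zero_of_mul hne)) hc (hk.trans hcy.symm)

lemma conv_indicator_apply_eq_zero {F : G.Arr → R} {C : Set G.Arr} {y : G.Arr}
    (h : ∀ c ∈ C, G.d c ≠ G.d y) : G.conv F (C.indicator fun _ => 1) y = 0 :=
  conv_apply_eq_zero fun k hk => by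
    rw [indicator_of_notMem fun hkC => h k hkC hk, mul_zero]

lemma conv_conv_indicator_apply_of_unique {f g : G.Arr → R} {C : Set G.Arr}
    (hC : InjOn G.d C) {γ β α c : G.Arr} (hβ : G.d β = G.d γ) (hc : c ∈ C)
    (hαc : G.d α = G.r c) (hγ : G.comp α c = G.comp γ (G.inv β))
    (huniq : ∀ k, G.d k = G.d γ → g k ≠ 0 → (∃ c ∈ C, G.d c = G.r k) → k = β) :
    G.conv (G.conv f (C.indicator fun _ => 1)) g γ = f α * g β := by
  have hdγ : ∀ k, G.d k = G.d γ → G.d (G.comp γ (G.inv k)) = G.r k := fun k hk => by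
    rw [G.d_comp _ _ (by rw [G.r_inv, hk]), G.d_inv]
  have hcγ : G.d c = G.d (G.comp γ (G.inv β)) := by rw [← hγ, G.d_comp _ _ hαc]
  rw [conv_apply_eq_single hβ, conv_indicator_apply_of_injOn hC hc hcγ, ← hγ,
    comp_inv_cancel_right hαc]
  intro k hk hne
  refine huniq k hk (right_ne_zero_of_mul hne) ?_
  by_contra! hno
  exact left_ne_zero_of_mul hne (conv_indicator_apply_eq_zero fun c hc => hdγ k hk ▸ hno c hc)

lemma AlgPrime.nontrivial (hp : G.AlgPrime R) : Nontrivial R := by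
  obtain ⟨f, -, hf⟩ := hp.1
  obtain ⟨x, hx⟩ := Function.ne_iff.1 hf
  exact nontrivial_of_ne _ _ hx

lemma AlgPrime.isDomain (hample : G.Ample) (heff : G.Effective) (hne : G.units.Nonempty)
    (hp : G.AlgPrime R) : IsDomain R := by
  have := hp.nontrivial
  obtain ⟨u, hu⟩ := hne
  obtain ⟨K, hKu, huK, hKc, hKo⟩ :=
    hample.exists_isCompact_isOpen heff (isOpen_units heff) subset_rfl hu
  refine @NoZeroDivisors.to_isDomain _ _ this ⟨fun {a b} hab => ?_⟩
  have hzero : ∀ h ∈ G.AlgebraSet R,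
      G.conv (G.conv (K.indicator fun _ => a) h) (K.indicator fun _ => b) = 0 := by
    intro h _
    ext x
    rw [conv_indicator_units_right _ _ hKu, conv_indicator_units_left _ _ hKu]
    split_ifs
    · rw [Pi.zero_apply, mul_right_comm, hab, zero_mul]
    all_goals simp
  rcases hp.2 _ (indicator_const_mem_algebraSet a hKc hKo) _
    (indicator_const_mem_algebraSet b hKc hKo) hzero with h | h
  · exact Or.inl (by simpa [huK] using congrFun h u)
  · exact Or.inr (by simpa [huK] using congrFun h u)

lemma AlgPrime.topTransitive (hample : G.Ample) (heff : G.Effective) (hp : G.AlgPrime R) :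
    G.TopTransitive := by
  have := hp.nontrivial
  intro U hU hUinv hUne
  by_contra hnd
  obtain ⟨V, hVo, ⟨v, hv⟩, hVU⟩ : ∃ V : Set G.units, IsOpen V ∧ V.Nonempty ∧
      V ∩ Subtype.val ⁻¹' U = ∅ := by
    simpa [UnitsDense, dense_iff_inter_open, not_nonempty_iff_eq_empty] using hnd
  obtain ⟨K, hKV, hvK, hKc, hKo⟩ := hample.exists_isCompact_isOpen heff
    ((isOpen_units heff).isOpenMap_subtype_val V hVo) (Subtype.coe_image_subset _ _) ⟨v, hv, rfl⟩
  obtain ⟨x, hx⟩ := hUne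
  obtain ⟨L, hLU, hxL, hLc, hLo⟩ := hample.exists_isCompact_isOpen heff (hU.isOpen heff) hU.1 hx
  have hzero : ∀ h ∈ G.AlgebraSet R,
      G.conv (G.conv (L.indicator fun _ => 1) h) (K.indicator fun _ => 1) = 0 := by
    intro h _
    ext y
    rw [conv_indicator_units_right _ _ (hKV.trans (Subtype.coe_image_subset _ _)),
      conv_indicator_units_left _ _ (hLU.trans hU.1)]
    split_ifs with hdy hry
    · -- an arrow from `K` into `L ⊆ U` would put a point of `K` into the invariant set `U`
      have hdyU : G.d y ∈ U := G.r_inv y ▸ hUinv (G.inv y) (by rw [G.d_inv]; exact hLU hry)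
      obtain ⟨w, hwV, hwy⟩ := hKV hdy
      have hw : w ∈ V ∩ Subtype.val ⁻¹' U := ⟨hwV, by rw [mem_preimage, hwy]; exact hdyU⟩
      rw [hVU] at hw
      exact hw.elim
    all_goals simp
  rcases hp.2 _ (indicator_const_mem_algebraSet 1 hLc hLo) _
    (indicator_const_mem_algebraSet 1 hKc hKo) hzero with h | h
  · simpa [hxL] using congrFun h x
  · simpa [hvK] using congrFun h v

lemma conv_conv_indicator_mulSet_apply {f g : G.Arr → R} {B₁ D B₂ W : Set G.Arr}
    (hC : InjOn G.d (mulSet (mulSet (G.inv '' B₁) D) (G.inv '' B₂)))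
    (hB₂ : InjOn G.d B₂) (hDW : D ⊆ G.d ⁻¹' W)
    (hiso : ∀ β ∈ B₂, ∀ k, g k ≠ 0 → G.r k = G.r β → G.d k ∈ W → G.d β ∈ W → k = β)
    {γ β₁ β₂ : G.Arr} (hγ : γ ∈ D) (hβ₁ : β₁ ∈ B₁) (hβ₁γ : G.r β₁ = G.r γ) (hβ₂ : β₂ ∈ B₂)
    (hβ₂γ : G.d β₂ = G.d γ) :
    G.conv (G.conv f ((mulSet (mulSet (G.inv '' B₁) D) (G.inv '' B₂)).indicator fun _ => 1))
      g γ = f β₁ * g β₂ := by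
  have hco₁ : G.d (G.inv β₁) = G.r γ := by rw [G.d_inv, hβ₁γ]
  have hco₂ : G.d (G.comp (G.inv β₁) γ) = G.r (G.inv β₂) := by
    rw [G.d_comp _ _ hco₁, G.r_inv, hβ₂γ]
  refine conv_conv_indicator_apply_of_unique hC hβ₂γ
    ⟨_, ⟨G.inv β₁, ⟨β₁, hβ₁, rfl⟩, γ, hγ, hco₁, rfl⟩, G.inv β₂, ⟨β₂, hβ₂, rfl⟩, hco₂, rfl⟩
    ?_ ?_ ?_
  · rw [G.r_comp _ _ hco₂, G.r_comp _ _ hco₁, G.r_inv]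
  · rw [← G.comp_assoc _ _ _ (by rw [G.r_comp _ _ hco₁, G.r_inv]) hco₂,
      comp_inv_cancel_left hβ₁γ]
  · rintro k hkγ hgk ⟨_, ⟨_, ⟨_, ⟨β₁', -, rfl⟩, δ, hδ, hco₁', rfl⟩, _, ⟨β₂', hβ₂', rfl⟩,
      hco₂', rfl⟩, hck⟩
    have hrk : G.r k = G.r β₂' := by rw [← hck, G.d_comp _ _ hco₂', G.d_inv]
    have hdβ₂' : G.d β₂' = G.d δ := by rw [← G.r_inv, ← hco₂', G.d_comp _ _ hco₁']
    obtain rfl := hiso β₂' hβ₂' k hgk hrk (hkγ ▸ hDW hγ) (hdβ₂' ▸ hDW hδ)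
    exact hB₂ hβ₂' hβ₂ (hkγ.trans hβ₂γ.symm)

theorem algPrime_of_topTransitive [T2Space G.Arr] [IsDomain R] (hample : G.Ample)
    (heff : G.Effective) (hne : G.units.Nonempty) (htrans : G.TopTransitive) :
    G.AlgPrime R := by
  refine ⟨?_, fun f hf g hg hzero => ?_⟩
  · obtain ⟨u, hu⟩ := hne
    obtain ⟨K, -, huK, hKc, hKo⟩ :=
      hample.exists_isCompact_isOpen heff (isOpen_units heff) subset_rfl hu
    exact ⟨_, indicator_const_mem_algebraSet 1 hKc hKo,
      fun h => one_ne_zero (α := R) (by simpa [huK] using congrFun h u)⟩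
  by_contra! hfg
  obtain ⟨x₁, hx₁⟩ := Function.ne_iff.1 hfg.1
  obtain ⟨x₂, hx₂⟩ := Function.ne_iff.1 hfg.2
  obtain ⟨B₁, hB₁, hx₁B₁, hfB₁⟩ := exists_isCompactOpenBisection hample heff
    ((isLocallyConstant_of_mem_algebraSet hf).isOpen_fiber (f x₁)) rfl
  obtain ⟨B₂, hB₂, hx₂B₂, hgB₂⟩ := exists_isCompactOpenBisection hample heff
    ((isLocallyConstant_of_mem_algebraSet hg).isOpen_fiber (g x₂)) rfl
  obtain ⟨S, hSc, hSo, hgS⟩ := exists_isCompact_isOpen_support_subset hg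
  obtain ⟨W, hWB₂, hWo, hWne, hiso⟩ := exists_open_subset_isolating heff hB₂.isCompact
    hB₂.isOpen hSc hSo (isOpenMap_d _ hB₂.isOpen) ⟨_, x₂, hx₂B₂, rfl⟩
  obtain ⟨γ, hγW, β₁, hβ₁, hβ₁γ⟩ := htrans.exists_arrow hWo
    (hWB₂.trans (image_subset_iff.2 fun β _ => d_mem_units β)) hWne
    (isOpenMap_r _ hB₁.isOpen) (image_subset_iff.2 fun β _ => r_mem_units β)
    ⟨_, x₁, hx₁B₁, rfl⟩
  obtain ⟨β₂, hβ₂, hβ₂γ⟩ := hWB₂ hγW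
  obtain ⟨D, hD, hγD, hDW⟩ :=
    exists_isCompactOpenBisection hample heff (hWo.preimage G.continuous_d) hγW
  have hC := (hB₁.inv.mulSet hD).mulSet hB₂.inv
  have hval := conv_conv_indicator_mulSet_apply (f := f) hC.injOn_d hB₂.injOn_d hDW
    (fun β hβ k hk => hiso β hβ k (hgS hk)) hγD hβ₁ hβ₁γ hβ₂ hβ₂γ
  rw [congrFun (hzero _ (indicator_const_mem_algebraSet 1 hC.isCompact hC.isOpen)) γ,
    hfB₁ hβ₁, hgB₂ hβ₂] at hval
  exact mul_ne_zero hx₁ hx₂ hval.symm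

end Convolution

end EtaleGroupoid

/-- For an effective Hausdorff ample groupoid `G` (with non-empty
unit space), `RG` is prime iff `R` is an integral domain and `G` is
topologically transitive. -/
theorem stmt8 (R : Type) [CommRing R] (G : EtaleGroupoid) [T2Space G.Arr]
    (hample : G.Ample) (heff : G.Effective) (hne : G.units.Nonempty) :
    G.AlgPrime R ↔ IsDomain R ∧ G.TopTransitive :=
  ⟨fun hp => ⟨hp.isDomain hample heff hne, hp.topTransitive hample heff⟩,
    fun ⟨_, htrans⟩ => EtaleGroupoid.algPrime_of_topTransitive hample heff hne htrans⟩
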